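/- arXiv:2004.03173 — 5 statements merged into one kernel-verified Lean document; each statement's English description precedes it below -/
import Mathlib

section
/- Let G be a finite group, h ∈ G of order n, g ∈ G, and b = b(g,h) = 1 + (1-h)g·H̃ the bicyclic unit in the unit group U of ℤG. Then the product over k = 1,…,n of the commutators [b^{-1}, h^k] (where [x,y] = x^{-1}y^{-1}xy) equals b^n. In particular, the image of b in the abelianization U/U' has order dividing n. -/
open MonoidAlgebra

/-- For the bicyclic unit `b = b(g,h)` in `U = U(ℤG)` with `h` of order `n`,
the product over `k = 1,…,n` of the commutators `[b⁻¹, h^k] = b·h^{-k}·b⁻¹·h^k`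
equals `b^n`; in particular the image of `b` in `U/U'` has order dividing `n`. -/
theorem bicyclic_commutator_product {G : Type*} [Group G] [Fintype G] (g h : G) (n : ℕ)
    (hn : orderOf h = n) (hU b : (MonoidAlgebra ℤ G)ˣ)
    (hhU : (hU : MonoidAlgebra ℤ G) = of ℤ G h)
    (hb : (b : MonoidAlgebra ℤ G)
        = 1 + (1 - of ℤ G h) * of ℤ G g * ∑ k ∈ Finset.range n, (of ℤ G h) ^ k) :
    ((List.range n).map (fun k => b * (hU ^ (k + 1))⁻¹ * b⁻¹ * hU ^ (k + 1))).prod = b ^ n ∧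
    (Abelianization.of b) ^ n = 1 := by
  set A := MonoidAlgebra ℤ G with hA
  set x : A := of ℤ G h with hx
  set S : A := ∑ k ∈ Finset.range n, x ^ k with hS
  set c : A := (1 - x) * of ℤ G g * S with hc
  have hn0 : 0 < n := hn ▸ orderOf_pos h
  have expand : ∀ a b : A, (1 + a) * (1 + b) = 1 + (a + b) + a * b := by
    intro a b
    rw [add_mul, one_mul, mul_add, mul_one]
    abel
  have hxn : x ^ n = 1 := by
    rw [hx, ← map_pow, ← hn, pow_orderOf_eq_one, map_one]
  have hSx : S * x = S := by
    have h1 := geom_sum_mul x n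
    rw [hxn, sub_self] at h1
    rw [← hS] at h1
    have h2 : S * x - S = 0 := by rw [← h1, mul_sub, mul_one]
    exact sub_eq_zero.mp h2
  have hSxm : ∀ m : ℕ, S * x ^ m = S := by
    intro m
    induction m with
    | zero => simp
    | succ m ih => rw [pow_succ, ← mul_assoc, ih, hSx]
  have hSsub : S * (1 - x) = 0 := by rw [mul_sub, mul_one, hSx, sub_self]
  have key : ∀ j : ℕ, c * (x ^ j * c) = 0 := by
    intro j
    have hz : S * (x ^ j * ((1 - x) * (of ℤ G g * S))) = 0 := by
      rw [← mul_assoc, hSxm, ← mul_assoc, hSsub, zero_mul]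
    simp only [hc, mul_assoc, hz, mul_zero]
  have hcc : c * c = 0 := by simpa using key 0
  have hcx : ∀ m : ℕ, c * x ^ m = c := by
    intro m
    rw [hc, mul_assoc ((1 - x) * of ℤ G g) S (x ^ m), hSxm]
  have hb1 : (↑b : A) * (1 - c) = 1 := by
    rw [hb, add_mul, one_mul, mul_sub, mul_one, hcc]
    abel
  have hbinv : (↑b⁻¹ : A) = 1 - c := by
    calc (↑b⁻¹ : A) = ↑b⁻¹ * (↑b * (1 - c)) := by rw [hb1, mul_one]
    _ = (↑b⁻¹ * ↑b) * (1 - c) := (mul_assoc _ _ _).symm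
    _ = 1 - c := by rw [Units.inv_mul, one_mul]
  have hUn : hU ^ n = 1 := by
    apply Units.ext
    rw [Units.val_pow_eq_pow_val, hhU, hxn, Units.val_one]
  have harith : ∀ k : ℕ, (k + 1) + (k + 1) * (n - 1) = (k + 1) * n := by
    intro k
    obtain ⟨m, rfl⟩ : ∃ m, n = m + 1 := ⟨n - 1, by omega⟩
    simp only [Nat.add_sub_cancel]
    ring
  have hUinv : ∀ k : ℕ, (hU ^ (k + 1))⁻¹ = hU ^ ((k + 1) * (n - 1)) := by
    intro k
    symm
    apply eq_inv_of_mul_eq_one_right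
    rw [← pow_add, harith k, pow_mul', hUn, one_pow]
  have hxam : ∀ k : ℕ, x ^ ((k + 1) * (n - 1)) * x ^ (k + 1) = 1 := by
    intro k
    rw [← pow_add, Nat.add_comm, harith k, pow_mul', hxn, one_pow]
  have hF : ∀ k : ℕ, ((b * (hU ^ (k + 1))⁻¹ * b⁻¹ * hU ^ (k + 1) : Aˣ) : A)
      = 1 + (1 - x ^ ((k + 1) * (n - 1))) * c := by
    intro k
    rw [Units.val_mul, Units.val_mul, Units.val_mul, hb, hbinv, hUinv k,
      Units.val_pow_eq_pow_val, Units.val_pow_eq_pow_val, hhU]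
    rw [mul_assoc ((1 + c) * x ^ ((k + 1) * (n - 1)))]
    rw [sub_mul, one_mul, hcx]
    rw [mul_sub, mul_assoc (1 + c), hxam k, mul_one]
    rw [add_mul, one_mul, add_mul, mul_assoc c, key, add_zero]
    rw [sub_mul, one_mul]
    abel
  have hcvc : ∀ j : ℕ, c * ((1 - x ^ j) * c) = 0 := by
    intro j
    rw [sub_mul, one_mul, mul_sub, hcc, key, sub_zero]
  have hstep : ∀ (T : A) (j : ℕ),
      (1 + T * c) * (1 + (1 - x ^ j) * c) = 1 + (T + (1 - x ^ j)) * c := by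
    intro T j
    have h0 : (T * c) * ((1 - x ^ j) * c) = 0 := by rw [mul_assoc, hcvc, mul_zero]
    rw [expand, h0, add_zero, add_mul]
  have hprod : ∀ m : ℕ,
      ((List.range m).map (fun k => (1 : A) + (1 - x ^ ((k + 1) * (n - 1))) * c)).prod
        = 1 + (∑ k ∈ Finset.range m, (1 - x ^ ((k + 1) * (n - 1)))) * c := by
    intro m
    induction m with
    | zero => simp
    | succ m ih =>
      rw [List.range_succ, List.map_append, List.prod_append, ih]
      simp only [List.map_cons, List.map_nil, List.prod_cons, List.prod_nil, mul_one]
      rw [hstep, Finset.sum_range_succ]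
  have hT0 : (∑ k ∈ Finset.range n, x ^ ((k + 1) * (n - 1))) * (1 - x) = 0 := by
    rw [Finset.sum_mul]
    have hterm : ∀ k : ℕ, x ^ ((k + 1) * (n - 1)) * (1 - x)
        = x ^ ((k + 1) * (n - 1)) - x ^ (k * (n - 1)) := by
      intro k
      rw [mul_sub, mul_one]
      congr 1
      rw [← pow_succ]
      have he : (k + 1) * (n - 1) + 1 = k * (n - 1) + n := by
        obtain ⟨m, rfl⟩ : ∃ m, n = m + 1 := ⟨n - 1, by omega⟩
        simp only [Nat.add_sub_cancel]
        ring
      rw [he, pow_add, hxn, mul_one]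
    rw [Finset.sum_congr rfl (fun k _ => hterm k),
      Finset.sum_range_sub (fun k => x ^ (k * (n - 1)))]
    rw [Nat.zero_mul, pow_zero, pow_mul, hxn, one_pow, sub_self]
  have hTc : (∑ k ∈ Finset.range n, (1 - x ^ ((k + 1) * (n - 1)))) * c = (n : A) * c := by
    have hsum : (∑ k ∈ Finset.range n, ((1 : A) - x ^ ((k + 1) * (n - 1))))
        = (n : A) - ∑ k ∈ Finset.range n, x ^ ((k + 1) * (n - 1)) := by
      rw [Finset.sum_sub_distrib, Finset.sum_const, Finset.card_range, nsmul_eq_mul, mul_one]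
    rw [hsum, sub_mul]
    have hT0c : (∑ k ∈ Finset.range n, x ^ ((k + 1) * (n - 1))) * c = 0 := by
      rw [hc, ← mul_assoc, ← mul_assoc, hT0, zero_mul, zero_mul]
    rw [hT0c, sub_zero]
  have hpow : ∀ m : ℕ, ((1 : A) + c) ^ m = 1 + (m : A) * c := by
    intro m
    induction m with
    | zero => simp
    | succ m ih =>
      rw [pow_succ, ih, expand, mul_assoc, hcc, mul_zero, add_zero, Nat.cast_succ,
        add_mul, one_mul]
  have part1 : ((List.range n).map
      (fun k => b * (hU ^ (k + 1))⁻¹ * b⁻¹ * hU ^ (k + 1))).prod = b ^ n := by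
    apply Units.ext
    have hmap := map_list_prod (Units.coeHom A)
      ((List.range n).map fun k => b * (hU ^ (k + 1))⁻¹ * b⁻¹ * hU ^ (k + 1))
    rw [List.map_map] at hmap
    simp only [Function.comp_def, Units.coeHom_apply, hF] at hmap
    rw [hmap, hprod n, hTc, Units.val_pow_eq_pow_val, hb, hpow n]
  refine ⟨part1, ?_⟩
  have hcomm : ∀ p q : Abelianization Aˣ, p * q⁻¹ * p⁻¹ * q = 1 := by
    intro p q
    rw [mul_comm p q⁻¹, mul_assoc q⁻¹ p p⁻¹, mul_inv_cancel, mul_one, inv_mul_cancel]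
  calc (Abelianization.of b) ^ n = Abelianization.of ((List.range n).map
        (fun k => b * (hU ^ (k + 1))⁻¹ * b⁻¹ * hU ^ (k + 1))).prod := by
          rw [part1, map_pow]
  _ = 1 := by
      rw [map_list_prod]
      apply List.prod_eq_one
      intro y hy
      simp only [List.map_map, List.mem_map, Function.comp_apply] at hy
      obtain ⟨k, _, rfl⟩ := hy
      rw [map_mul, map_mul, map_mul, map_inv, map_inv]
      exact hcomm _ _
end

section
/- Let g ∈ G of order n, l an integer with l^m ≡ 1 (mod n), and suppose g is conjugate in G to g^l via h ∈ G (i.e., h^{-1}gh = g^l). Let s be the multiplicative order of l modulo n. Then in U(ℤG), the product over i = 1,…,s-1 of the commutators [u_{l,m}(g)^{-1}, h^i] equals u_{l,m}(g)^s. In particular the image of u_{l,m}(g) in the abelianization of U(ℤG) has order dividing s. -/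
open MonoidAlgebra

/-- The Bass unit `u_{k,m}(g) = (1 + g + ⋯ + g^{k-1})^m + ((1-k^m)/n)·g̃` in `ℤG`,
where `n = orderOf g` and `g̃ = ∑_{i<n} g^i`. -/
noncomputable def bassUnit {G : Type*} [Group G] (g : G) (k m : ℕ) : MonoidAlgebra ℤ G :=
  (∑ i ∈ Finset.range k, (of ℤ G g) ^ i) ^ m +
    (((1 - (k : ℤ) ^ m) / (orderOf g : ℤ)) •
      ∑ i ∈ Finset.range (orderOf g), (of ℤ G g) ^ i)

section GAux
variable {G : Type*} [Group G]

lemma commute_bassUnit_right (g' : G) (k m : ℕ) {x : MonoidAlgebra ℤ G}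
    (hx : Commute (of ℤ G g') x) : Commute (bassUnit g' k m) x := by
  unfold bassUnit
  refine Commute.add_left ?_ ?_
  · exact (Commute.sum_left _ _ _ fun i _ => hx.pow_left i).pow_left m
  · exact (Commute.sum_left _ _ _ fun i _ => hx.pow_left i).smul_left _

lemma commute_bassUnit (g : G) (a b k k' m m' : ℕ) :
    Commute (bassUnit (g ^ a) k m) (bassUnit (g ^ b) k' m') := by
  have h0 : Commute (of ℤ G (g ^ a)) (of ℤ G (g ^ b)) := by
    rw [map_pow, map_pow]
    exact (Commute.refl _).pow_pow _ _
  exact (commute_bassUnit_right _ k' m' (commute_bassUnit_right _ k m h0).symm).symm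

lemma conj_bassUnit (g h : G) (k m : ℕ) :
    of ℤ G h⁻¹ * bassUnit g k m * of ℤ G h = bassUnit (h⁻¹ * g * h) k m := by
  have hab : (of ℤ G h⁻¹) * of ℤ G h = 1 := by rw [← map_mul, inv_mul_cancel, map_one]
  have hba : (of ℤ G h) * of ℤ G h⁻¹ = 1 := by rw [← map_mul, mul_inv_cancel, map_one]
  set a := of ℤ G h⁻¹ with hadef
  set b := of ℤ G h with hbdef
  have conj_pow : ∀ (x : MonoidAlgebra ℤ G) (j : ℕ), a * x ^ j * b = (a * x * b) ^ j := by
    intro x j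
    induction j with
    | zero => simpa using hab
    | succ j ih =>
      rw [pow_succ, pow_succ, ← ih]
      calc a * (x ^ j * x) * b = a * x ^ j * (b * a) * x * b := by rw [hba, mul_one, ← mul_assoc]
        _ = a * x ^ j * b * (a * x * b) := by simp only [mul_assoc]
  have horder : orderOf (h⁻¹ * g * h) = orderOf g := by
    have e : h⁻¹ * g * h = (MulAut.conj h⁻¹) g := by
      simp [MulAut.conj_apply]
    rw [e]
    exact orderOf_injective (MulAut.conj h⁻¹).toMonoidHom (MulAut.conj h⁻¹).injective g
  have hofconj : ∀ i : ℕ, a * (of ℤ G g) ^ i * b = (of ℤ G (h⁻¹ * g * h)) ^ i := by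
    intro i
    rw [conj_pow, hadef, hbdef, ← map_mul, ← map_mul]
  unfold bassUnit
  rw [horder, mul_add, add_mul, mul_smul_comm, smul_mul_assoc]
  congr 1
  · rw [conj_pow, Finset.mul_sum, Finset.sum_mul]
    congr 1
    exact Finset.sum_congr rfl fun i _ => hofconj i
  · congr 1
    rw [Finset.mul_sum, Finset.sum_mul]
    exact Finset.sum_congr rfl fun i _ => hofconj i

end GAux


section RingAux
variable {R : Type*} [Ring R]

lemma aux_geom_prod (x : R) (k l : ℕ) :
    (∑ i ∈ Finset.range k, x ^ i) * (∑ j ∈ Finset.range l, (x ^ k) ^ j)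
      = ∑ p ∈ Finset.range (k * l), x ^ p := by
  induction l with
  | zero => simp
  | succ l ih =>
    rw [Finset.sum_range_succ, mul_add, ih, Nat.mul_succ, Finset.sum_range_add]
    congr 1
    rw [Finset.sum_mul]
    refine Finset.sum_congr rfl fun i _ => ?_
    rw [← pow_mul, ← pow_add, Nat.add_comm]

lemma aux_pow_mul_T (x : R) (n : ℕ) (hx : x ^ n = 1) :
    ∀ j : ℕ, x ^ j * (∑ i ∈ Finset.range n, x ^ i) = ∑ i ∈ Finset.range n, x ^ i := by
  have hcomm : Commute x (∑ i ∈ Finset.range n, x ^ i) :=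
    Commute.sum_right _ _ _ fun i _ => (Commute.refl x).pow_right i
  have base : x * (∑ i ∈ Finset.range n, x ^ i) = ∑ i ∈ Finset.range n, x ^ i := by
    have hg := geom_sum_mul x n
    rw [hx, sub_self, mul_sub, mul_one, sub_eq_zero] at hg
    rw [hcomm.eq, hg]
  intro j
  induction j with
  | zero => rw [pow_zero, one_mul]
  | succ j ih => rw [pow_succ, mul_assoc, base, ih]

lemma aux_geom_pow_mul_T (y T : R) (hT : ∀ j : ℕ, y ^ j * T = T) (k m : ℕ) :
    (∑ i ∈ Finset.range k, y ^ i) ^ m * T = ((k : ℤ) ^ m) • T := by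
  have hS : (∑ i ∈ Finset.range k, y ^ i) * T = (k : ℤ) • T := by
    rw [Finset.sum_mul]
    have h1 : ∑ i ∈ Finset.range k, y ^ i * T = ∑ _i ∈ Finset.range k, T :=
      Finset.sum_congr rfl fun i _ => hT i
    rw [h1, Finset.sum_const, Finset.card_range, natCast_zsmul]
  induction m with
  | zero => simp
  | succ m ih =>
    rw [pow_succ, mul_assoc, hS, mul_smul_comm, ih, smul_smul, ← pow_succ']

lemma aux_T_reindex (x : R) (n k : ℕ) (hn : 0 < n) (hx : x ^ n = 1) (hk : Nat.Coprime k n) :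
    ∑ i ∈ Finset.range n, (x ^ k) ^ i = ∑ i ∈ Finset.range n, x ^ i := by
  haveI : NeZero n := ⟨hn.ne'⟩
  set k' := ((k : ZMod n)⁻¹).val with hk'def
  have hkk' : (k * k') % n = 1 % n := by
    have hcast : ((k * k' : ℕ) : ZMod n) = ((1 : ℕ) : ZMod n) := by
      push_cast
      rw [hk'def, ZMod.natCast_zmod_val, ZMod.coe_mul_inv_eq_one k hk]
    exact (ZMod.natCast_eq_natCast_iff _ _ _).mp hcast
  have hinv : ∀ a b : ℕ, (a * b) % n = 1 % n → ∀ i ∈ Finset.range n, (b * (a * i % n)) % n = i := by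
    intro a b hab i hi
    rw [Finset.mem_range] at hi
    have h1 : b * (a * i % n) ≡ b * (a * i) [MOD n] := Nat.ModEq.mul_left b (Nat.mod_modEq _ n)
    have h2 : b * (a * i) ≡ 1 * i [MOD n] := by
      have e : b * (a * i) = (a * b) * i := by ring
      rw [e]
      exact Nat.ModEq.mul_right i hab
    have h3 : b * (a * i % n) ≡ i [MOD n] := by simpa using h1.trans h2
    calc b * (a * i % n) % n = i % n := h3
      _ = i := Nat.mod_eq_of_lt hi
  refine Finset.sum_nbij' (fun i => k * i % n) (fun j => k' * j % n) ?_ ?_ ?_ ?_ ?_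
  · intro a _; exact Finset.mem_range.mpr (Nat.mod_lt _ hn)
  · intro a _; exact Finset.mem_range.mpr (Nat.mod_lt _ hn)
  · intro a ha; exact hinv k k' hkk' a ha
  · intro a ha
    refine hinv k' k ?_ a ha
    rwa [Nat.mul_comm]
  · intro a _
    rw [← pow_mul, pow_eq_pow_mod (k * a) hx]

end RingAux

section GAux2
variable {G : Type*} [Group G]

lemma of_pow_orderOf (g : G) : (of ℤ G g) ^ (orderOf g) = 1 := by
  rw [← map_pow, pow_orderOf_eq_one, map_one]

lemma bassUnit_eq_one (g : G) (k m : ℕ) (hn : 0 < orderOf g) (hm : 0 < m)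
    (hk : k ≡ 1 [MOD orderOf g]) : bassUnit g k m = 1 := by
  set n := orderOf g with hndef
  set x := of ℤ G g with hxdef
  have hx : x ^ n = 1 := of_pow_orderOf g
  have hT := aux_pow_mul_T x n hx
  set T := ∑ i ∈ Finset.range n, x ^ i with hTdef
  have hTT : T * T = (n : ℤ) • T := by
    have h := aux_geom_pow_mul_T x T hT n 1
    simpa [pow_one] using h
  have hne : (n : ℤ) ≠ 0 := by exact_mod_cast hn.ne'
  rcases Nat.eq_zero_or_pos k with hk0 | hkpos
  · -- k = 0 forces n = 1
    subst hk0
    have hn1 : n = 1 := by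
      have : n ∣ 1 - 0 := (Nat.modEq_iff_dvd' (by norm_num)).mp hk
      simpa using this
    have hx1 : x = 1 := by
      rw [hxdef]
      have : g = 1 := orderOf_eq_one_iff.mp hn1
      rw [this, map_one]
    unfold bassUnit
    rw [← hndef, ← hxdef, hn1, hx1]
    simp [zero_pow hm.ne']
  · -- k ≥ 1 : k = 1 + n * t
    have hdvd : n ∣ k - 1 := (Nat.modEq_iff_dvd' hkpos).mp hk.symm
    obtain ⟨t, ht⟩ := hdvd
    have hkt : k = 1 + n * t := by omega
    have hxt : x * T = T := by have := hT 1; rwa [pow_one] at this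
    have hblock : ∀ t : ℕ, ∑ i ∈ Finset.range (n * t), x ^ i = (t : ℤ) • T := by
      intro t
      induction t with
      | zero => simp
      | succ t ih =>
        rw [Nat.mul_succ, Finset.sum_range_add, ih]
        have e : ∑ i ∈ Finset.range n, x ^ (n * t + i) = T := by
          have e2 : ∑ i ∈ Finset.range n, x ^ (n * t + i)
              = x ^ (n * t) * ∑ i ∈ Finset.range n, x ^ i := by
            rw [Finset.mul_sum]
            exact Finset.sum_congr rfl fun i _ => by rw [pow_add]
          rw [e2, ← hTdef, hT]
        rw [e]
        push_cast
        rw [add_smul, one_smul]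
    have hSk : ∑ i ∈ Finset.range k, x ^ i = 1 + (t : ℤ) • T := by
      rw [hkt, Finset.sum_range_add, Finset.sum_range_one, pow_zero]
      congr 1
      have e : ∑ i ∈ Finset.range (n * t), x ^ (1 + i)
          = x * ∑ i ∈ Finset.range (n * t), x ^ i := by
        rw [Finset.mul_sum]
        exact Finset.sum_congr rfl fun i _ => by rw [pow_add, pow_one]
      rw [e, hblock, mul_smul_comm, hxt]
    have hkcast : (k : ℤ) = 1 + (n : ℤ) * t := by exact_mod_cast congrArg (Nat.cast (R := ℤ)) hkt
    have main : ∀ m : ℕ, ∃ c : ℤ, (1 + (t : ℤ) • T) ^ m = 1 + c • T ∧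
        (n : ℤ) * c = (k : ℤ) ^ m - 1 := by
      intro m
      induction m with
      | zero => exact ⟨0, by simp, by simp⟩
      | succ m ih =>
        obtain ⟨c, hc1, hc2⟩ := ih
        refine ⟨(t : ℤ) + c + c * t * n, ?_, ?_⟩
        · rw [pow_succ, hc1]
          have expand : (1 + c • T) * (1 + (t : ℤ) • T)
              = 1 + (t : ℤ) • T + c • T + (c * (t : ℤ)) • (T * T) := by
            rw [mul_add, mul_one, add_mul, one_mul, smul_mul_smul_comm]
            abel
          rw [expand, hTT, smul_smul]
          module
        · rw [pow_succ]
          linear_combination (1 + (n : ℤ) * t) * hc2 - (k : ℤ) ^ m * hkcast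
    obtain ⟨c, hc1, hc2⟩ := main m
    have hdiv : (1 - (k : ℤ) ^ m) / (n : ℤ) = -c := by
      have e : (1 - (k : ℤ) ^ m) = (n : ℤ) * (-c) := by linarith [hc2]
      rw [e, Int.mul_ediv_cancel_left _ hne]
    unfold bassUnit
    rw [← hndef, ← hxdef, ← hTdef, hdiv, hSk, hc1, add_assoc, ← add_smul]
    simp

lemma bassUnit_mul (g : G) (k l m : ℕ) (hn : 0 < orderOf g)
    (hk : (orderOf g).Coprime k)
    (hkm : (orderOf g : ℤ) ∣ (k : ℤ) ^ m - 1) (hlm : (orderOf g : ℤ) ∣ (l : ℤ) ^ m - 1) :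
    bassUnit g k m * bassUnit (g ^ k) l m = bassUnit g (k * l) m := by
  obtain ⟨a, ha⟩ := hkm
  obtain ⟨b, hb⟩ := hlm
  set n := orderOf g with hndef
  set x := of ℤ G g with hxdef
  have hx : x ^ n = 1 := of_pow_orderOf g
  have hT := aux_pow_mul_T x n hx
  set T := ∑ i ∈ Finset.range n, x ^ i with hTdef
  have hne : (n : ℤ) ≠ 0 := by exact_mod_cast hn.ne'
  have hord : orderOf (g ^ k) = n := Nat.Coprime.orderOf_pow hk
  have hofk : of ℤ G (g ^ k) = x ^ k := by rw [map_pow]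
  have hTre : ∑ i ∈ Finset.range n, (x ^ k) ^ i = T := aux_T_reindex x n k hn hx hk.symm
  have h1 : (∑ i ∈ Finset.range k, x ^ i) ^ m * T = ((k : ℤ) ^ m) • T :=
    aux_geom_pow_mul_T x T hT k m
  have h2 : (∑ j ∈ Finset.range l, (x ^ k) ^ j) ^ m * T = ((l : ℤ) ^ m) • T :=
    aux_geom_pow_mul_T (x ^ k) T (fun j => by rw [← pow_mul]; exact hT (k * j)) l m
  have hTT : T * T = (n : ℤ) • T := by
    have h := aux_geom_pow_mul_T x T hT n 1
    simpa [pow_one] using h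
  have hcS : Commute (∑ i ∈ Finset.range k, x ^ i) (∑ j ∈ Finset.range l, (x ^ k) ^ j) :=
    Commute.sum_left _ _ _ fun i _ => Commute.sum_right _ _ _ fun j _ =>
      ((Commute.refl x).pow_pow i k).pow_right j
  have hcTS : Commute T (∑ j ∈ Finset.range l, (x ^ k) ^ j) :=
    Commute.sum_left _ _ _ fun i _ => Commute.sum_right _ _ _ fun j _ =>
      ((Commute.refl x).pow_pow i k).pow_right j
  have hna : (n : ℤ) * a = (k : ℤ) ^ m - 1 := by linarith [ha]
  have hnb : (n : ℤ) * b = (l : ℤ) ^ m - 1 := by linarith [hb]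
  have hda : (1 - (k : ℤ) ^ m) / (n : ℤ) = -a := by
    have e : (1 - (k : ℤ) ^ m) = (n : ℤ) * (-a) := by linarith [hna]
    rw [e, Int.mul_ediv_cancel_left _ hne]
  have hdb : (1 - (l : ℤ) ^ m) / (n : ℤ) = -b := by
    have e : (1 - (l : ℤ) ^ m) = (n : ℤ) * (-b) := by linarith [hnb]
    rw [e, Int.mul_ediv_cancel_left _ hne]
  set c : ℤ := -(a * (l : ℤ) ^ m) - b * (k : ℤ) ^ m + a * b * n with hcdef
  have hdc : (1 - ((k * l : ℕ) : ℤ) ^ m) / (n : ℤ) = c := by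
    have e : (1 - ((k * l : ℕ) : ℤ) ^ m) = (n : ℤ) * c := by
      have expand : (n : ℤ) * c
          = -(((n : ℤ) * a) * (l : ℤ) ^ m) - ((n : ℤ) * b) * (k : ℤ) ^ m
            + ((n : ℤ) * a) * ((n : ℤ) * b) := by rw [hcdef]; ring
      rw [expand, hna, hnb]
      push_cast
      ring
    rw [e, Int.mul_ediv_cancel_left _ hne]
  have eA : (∑ i ∈ Finset.range k, x ^ i) ^ m * (∑ j ∈ Finset.range l, (x ^ k) ^ j) ^ m
      = (∑ p ∈ Finset.range (k * l), x ^ p) ^ m := by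
    rw [← hcS.mul_pow, aux_geom_prod]
  have eB : (∑ i ∈ Finset.range k, x ^ i) ^ m * ((-b) • T) = (-b * (k : ℤ) ^ m) • T := by
    rw [mul_smul_comm, h1, smul_smul]
  have eC : ((-a) • T) * (∑ j ∈ Finset.range l, (x ^ k) ^ j) ^ m
      = (-a * (l : ℤ) ^ m) • T := by
    rw [smul_mul_assoc, (hcTS.pow_right m).eq, h2, smul_smul]
  have eD : ((-a) • T) * ((-b) • T) = ((-a) * (-b) * (n : ℤ)) • T := by
    rw [smul_mul_smul_comm, hTT, smul_smul]
  unfold bassUnit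
  rw [← hxdef, ← hndef, hord, hofk, hTre, ← hTdef, hda, hdb, hdc]
  rw [add_mul, mul_add, mul_add, eA, eB, eC, eD]
  module

end GAux2

/-- if `g` has order `n`, `l^m ≡ 1 (mod n)`, `h⁻¹gh = g^l` and `s` is the
multiplicative order of `l` mod `n`, then `∏_{i=1}^{s-1} [u_{l,m}(g)⁻¹, h^i] = u_{l,m}(g)^s`
in `U(ℤG)` (with `[x,y] = x⁻¹y⁻¹xy`), so the image of `u_{l,m}(g)` in the abelianization
of `U(ℤG)` has order dividing `s`. -/
theorem bassUnit_commutator_product {G : Type*} [Group G] [Fintype G] (g h : G) (n l m s : ℕ)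
    (hn : orderOf g = n) (hm : 0 < m) (hlm : l ^ m ≡ 1 [MOD n])
    (hconj : h⁻¹ * g * h = g ^ l) (hs : orderOf (l : ZMod n) = s)
    (u hU : (MonoidAlgebra ℤ G)ˣ)
    (hu : (u : MonoidAlgebra ℤ G) = bassUnit g l m)
    (hhU : (hU : MonoidAlgebra ℤ G) = of ℤ G h) :
    ((List.range (s - 1)).map (fun i => u * (hU ^ (i + 1))⁻¹ * u⁻¹ * hU ^ (i + 1))).prod
      = u ^ s ∧
    (Abelianization.of u) ^ s = 1 := by
  subst hn
  have hn0 : 0 < orderOf g := orderOf_pos g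
  haveI : NeZero (orderOf g) := ⟨hn0.ne'⟩
  have hlZ : ((l : ZMod (orderOf g))) ^ m = 1 := by
    have e : ((l ^ m : ℕ) : ZMod (orderOf g)) = ((1 : ℕ) : ZMod (orderOf g)) :=
      (ZMod.natCast_eq_natCast_iff _ _ _).mpr hlm
    push_cast at e
    exact e
  have hs0 : 0 < s := by
    rw [← hs]
    exact orderOf_pos_iff.mpr (isOfFinOrder_iff_pow_eq_one.mpr ⟨m, hm, hlZ⟩)
  have hcop : (orderOf g).Coprime l :=
    ((ZMod.isUnit_iff_coprime l (orderOf g)).mp (IsUnit.of_pow_eq_one hlZ hm.ne')).symm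
  have hdvdl : ∀ j : ℕ, (orderOf g : ℤ) ∣ ((l ^ j : ℕ) : ℤ) ^ m - 1 := by
    intro j
    have hmod : (l ^ j) ^ m ≡ 1 [MOD orderOf g] := by
      have e : (l ^ j) ^ m = (l ^ m) ^ j := by
        rw [← pow_mul, ← pow_mul, Nat.mul_comm]
      rw [e]
      simpa using hlm.pow j
    have hd := hmod.dvd
    have hd2 : ((orderOf g : ℤ)) ∣ (1 : ℤ) - ((l ^ j) ^ m : ℕ) := by exact_mod_cast hd
    rw [← dvd_neg] at hd2
    push_cast at hd2 ⊢
    simpa [neg_sub] using hd2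
  have hdvdl1 : (orderOf g : ℤ) ∣ (l : ℤ) ^ m - 1 := by
    have e := hdvdl 1
    push_cast at e
    simpa using e
  have hmods : l ^ s ≡ 1 [MOD orderOf g] := by
    have e : ((l : ZMod (orderOf g))) ^ s = 1 := by rw [← hs]; exact pow_orderOf_eq_one _
    have e2 : ((l ^ s : ℕ) : ZMod (orderOf g)) = ((1 : ℕ) : ZMod (orderOf g)) := by
      push_cast
      simpa using e
    exact (ZMod.natCast_eq_natCast_iff _ _ _).mp e2
  have hconjpow1 : ∀ (x : G) (p : ℕ), (h⁻¹ * x * h) ^ p = h⁻¹ * x ^ p * h := by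
    intro x p
    induction p with
    | zero => simp
    | succ p ih => rw [pow_succ, ih, pow_succ]; group
  have hconjpow : ∀ j : ℕ, (h ^ j)⁻¹ * g * h ^ j = g ^ l ^ j := by
    intro j
    induction j with
    | zero => simp
    | succ j ih =>
      have e0 : (h ^ (j + 1))⁻¹ * g * h ^ (j + 1) = h⁻¹ * ((h ^ j)⁻¹ * g * h ^ j) * h := by
        rw [pow_succ]; group
      rw [e0, ih, ← hconjpow1, hconj, ← pow_mul, ← pow_succ']
  have chain : ∀ j : ℕ,
      ((List.range j).map (fun i => bassUnit (g ^ l ^ i) l m)).prod = bassUnit g (l ^ j) m := by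
    intro j
    induction j with
    | zero =>
      simp only [List.range_zero, List.map_nil, List.prod_nil, pow_zero]
      exact (bassUnit_eq_one g 1 m hn0 hm (Nat.ModEq.refl 1)).symm
    | succ j ih =>
      rw [List.range_succ, List.map_append, List.prod_append]
      simp only [List.map_cons, List.map_nil, List.prod_cons, List.prod_nil, mul_one]
      rw [ih, bassUnit_mul g (l ^ j) l m hn0 (hcop.pow_right j) (hdvdl j) hdvdl1, ← pow_succ]
  have hlast : bassUnit g (l ^ s) m = 1 := bassUnit_eq_one g (l ^ s) m hn0 hm hmods
  have hUj : ∀ j : ℕ, ((hU ^ j : (MonoidAlgebra ℤ G)ˣ) : MonoidAlgebra ℤ G)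
      = of ℤ G (h ^ j) := by
    intro j
    rw [Units.val_pow_eq_pow_val, hhU, map_pow]
  have hUjinv : ∀ j : ℕ, (((hU ^ j)⁻¹ : (MonoidAlgebra ℤ G)ˣ) : MonoidAlgebra ℤ G)
      = of ℤ G ((h ^ j)⁻¹) :=
    fun j => Units.inv_eq_of_mul_eq_one_left (by rw [hUj, ← map_mul, inv_mul_cancel, map_one])
  set v : ℕ → (MonoidAlgebra ℤ G)ˣ := fun j => (hU ^ j)⁻¹ * u * hU ^ j with hvdef
  have hv : ∀ j : ℕ, ((v j : (MonoidAlgebra ℤ G)ˣ) : MonoidAlgebra ℤ G)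
      = bassUnit (g ^ l ^ j) l m := by
    intro j
    simp only [hvdef]
    rw [Units.val_mul, Units.val_mul, hUjinv, hUj, hu, conj_bassUnit, hconjpow j]
  have hv0 : v 0 = u := by simp only [hvdef]; simp
  have hvcomm : ∀ i j : ℕ, Commute (v i) (v j) := by
    intro i j
    have e : (v i) * (v j) = (v j) * (v i) :=
      Units.ext (by
        simp only [Units.val_mul, hv]
        exact commute_bassUnit g (l ^ i) (l ^ j) l l m m)
    exact e
  have hprodv : ((List.range s).map v).prod = 1 := by
    apply Units.ext
    rw [Units.val_one]
    calc (((List.range s).map v).prod : MonoidAlgebra ℤ G)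
        = (((List.range s).map v).map (Units.coeHom (MonoidAlgebra ℤ G))).prod :=
          map_list_prod (Units.coeHom (MonoidAlgebra ℤ G)) _
      _ = ((List.range s).map (fun i => bassUnit (g ^ l ^ i) l m)).prod := by
          rw [List.map_map,
            show (⇑(Units.coeHom (MonoidAlgebra ℤ G)) ∘ v)
                = (fun i => bassUnit (g ^ l ^ i) l m) from funext fun i => hv i]
      _ = bassUnit g (l ^ s) m := chain s
      _ = 1 := hlast
  have hUcomm : ∀ j : ℕ, Commute u (v j) := by
    intro j
    have e := hvcomm 0 j
    rwa [hv0] at e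
  have key : ∀ t : ℕ,
      ((List.range t).map (fun i => u * (hU ^ (i + 1))⁻¹ * u⁻¹ * hU ^ (i + 1))).prod
        = u ^ t * (((List.range t).map (fun i => v (i + 1))).prod)⁻¹ := by
    intro t
    induction t with
    | zero => simp
    | succ t ih =>
      rw [List.range_succ, List.map_append, List.prod_append, ih,
        List.map_append, List.prod_append]
      simp only [List.map_cons, List.map_nil, List.prod_cons, List.prod_nil, mul_one]
      have hterm : u * (hU ^ (t + 1))⁻¹ * u⁻¹ * hU ^ (t + 1) = u * (v (t + 1))⁻¹ := by
        simp only [hvdef]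
        group
      set W := ((List.range t).map (fun i => v (i + 1))).prod with hWdef
      have hcomW : Commute u W := by
        refine Commute.list_prod_right _ _ ?_
        intro x hx
        rw [List.mem_map] at hx
        obtain ⟨i, _, rfl⟩ := hx
        exact hUcomm (i + 1)
      have hcomWv : Commute W (v (t + 1)) := by
        refine Commute.list_prod_left _ _ ?_
        intro x hx
        rw [List.mem_map] at hx
        obtain ⟨i, _, rfl⟩ := hx
        exact hvcomm (i + 1) (t + 1)
      rw [hterm, mul_inv_rev]
      calc u ^ t * W⁻¹ * (u * (v (t + 1))⁻¹)
          = u ^ t * (W⁻¹ * u) * (v (t + 1))⁻¹ := by group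
        _ = u ^ t * (u * W⁻¹) * (v (t + 1))⁻¹ := by rw [← hcomW.inv_right.eq]
        _ = u ^ (t + 1) * (W⁻¹ * (v (t + 1))⁻¹) := by rw [← mul_assoc, ← pow_succ, mul_assoc]
        _ = u ^ (t + 1) * ((v (t + 1))⁻¹ * W⁻¹) := by rw [hcomWv.inv_inv.eq]
  have hsplit : u * ((List.range (s - 1)).map (fun i => v (i + 1))).prod = 1 := by
    rw [← hv0, ← hprodv]
    conv_rhs => rw [show s = (s - 1) + 1 from (Nat.succ_pred_eq_of_pos hs0).symm]
    rw [List.range_succ_eq_map, List.map_cons, List.prod_cons, List.map_map]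
    rfl
  have hW' : ((List.range (s - 1)).map (fun i => v (i + 1))).prod = u⁻¹ :=
    eq_inv_of_mul_eq_one_right hsplit
  have part1 :
      ((List.range (s - 1)).map (fun i => u * (hU ^ (i + 1))⁻¹ * u⁻¹ * hU ^ (i + 1))).prod
        = u ^ s := by
    rw [key (s - 1), hW', inv_inv, ← pow_succ, Nat.sub_add_cancel hs0]
  refine ⟨part1, ?_⟩
  have habel : ∀ a b : Abelianization (MonoidAlgebra ℤ G)ˣ, a * b⁻¹ * a⁻¹ * b = 1 := by
    intro a b
    rw [mul_assoc, mul_mul_mul_comm]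
    simp
  calc (Abelianization.of u) ^ s
      = Abelianization.of (u ^ s) := (map_pow _ _ _).symm
    _ = Abelianization.of
        (((List.range (s - 1)).map
          (fun i => u * (hU ^ (i + 1))⁻¹ * u⁻¹ * hU ^ (i + 1))).prod) := by rw [part1]
    _ = (((List.range (s - 1)).map
          (fun i => u * (hU ^ (i + 1))⁻¹ * u⁻¹ * hU ^ (i + 1))).map
            (Abelianization.of (G := (MonoidAlgebra ℤ G)ˣ))).prod := map_list_prod _ _
    _ = 1 := by
        apply List.prod_eq_one
        intro x hx
        rw [List.map_map, List.mem_map] at hx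
        obtain ⟨i, _, rfl⟩ := hx
        simp only [Function.comp_apply]
        rw [map_mul, map_mul, map_mul, map_inv, map_inv]
        exact habel _ _
end

section
/- Let V be the group with presentation ⟨a, b, u₀, u₁, u₂ | a⁴ = b² = 1, b^{-1}ab = a^{-1}, a^{-1}u₀a = u₂, a^{-1}u₁a = (u₀u₁u₂)^{-1}, a^{-1}u₂a = u₀, b^{-1}u₀b = u₀^{-1}, b^{-1}u₁b = u₀u₁u₂, b^{-1}u₂b = u₂^{-1}⟩. Then V/V' ≅ C₂ × C₂ × C₂ × C₂. -/
/-- Generators `a, b, u₀, u₁, u₂` (as `0, 1, 2, 3, 4 : Fin 5`) and the relators of the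
presentation of `V(ℤD₈)`:
`a⁴ = b² = 1`, `b⁻¹ab = a⁻¹`, `u₀^a = u₂`, `u₁^a = (u₀u₁u₂)⁻¹`, `u₂^a = u₀`,
`u₀^b = u₀⁻¹`, `u₁^b = u₀u₁u₂`, `u₂^b = u₂⁻¹`. -/
def relsD8 : Set (FreeGroup (Fin 5)) :=
  letI a := FreeGroup.of (0 : Fin 5)
  letI b := FreeGroup.of (1 : Fin 5)
  letI u₀ := FreeGroup.of (2 : Fin 5)
  letI u₁ := FreeGroup.of (3 : Fin 5)
  letI u₂ := FreeGroup.of (4 : Fin 5)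
  {a ^ 4, b ^ 2, b⁻¹ * a * b * a,
   a⁻¹ * u₀ * a * u₂⁻¹, a⁻¹ * u₁ * a * (u₀ * u₁ * u₂), a⁻¹ * u₂ * a * u₀⁻¹,
   b⁻¹ * u₀ * b * u₀, b⁻¹ * u₁ * b * (u₀ * u₁ * u₂)⁻¹, b⁻¹ * u₂ * b * u₂}


/-!
In the abelianization the relators `b⁻¹ x b x` for `x = a, u₀, u₂` become `x² = 1`, the relator
`a⁻¹ u₂ a u₀⁻¹` becomes `u₂ = u₀`, and then `a⁻¹ u₁ a (u₀ u₁ u₂)` becomes `u₁² = 1`. So the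
abelianization is generated by the four involutions `a, b, u₀, u₁`. Conversely, sending `a, b, u₀, u₁`
to the standard basis of `C₂⁴` and `u₂` to the image of `u₀` kills every relator, and the two maps
are mutually inverse.
-/

theorem pow_val_add_of_pow_eq_one {M : Type*} [Monoid M] {n : ℕ} [NeZero n] {x : M}
    (hx : x ^ n = 1) (a b : ZMod n) : x ^ (a + b).val = x ^ a.val * x ^ b.val := by
  rw [ZMod.val_add, ← pow_eq_pow_mod _ hx, pow_add]

namespace VZD8

open Multiplicative

local notation "C₂⁴" => Multiplicative (ZMod 2 × ZMod 2 × ZMod 2 × ZMod 2)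

def genImage : Fin 5 → C₂⁴
  | 0 => ofAdd (1, 0, 0, 0)
  | 1 => ofAdd (0, 1, 0, 0)
  | 2 => ofAdd (0, 0, 1, 0)
  | 3 => ofAdd (0, 0, 0, 1)
  | 4 => ofAdd (0, 0, 1, 0)

theorem lift_genImage_relator : ∀ r ∈ relsD8, FreeGroup.lift genImage r = 1 := by
  simp only [relsD8, Set.mem_insert_iff, Set.mem_singleton_iff, forall_eq_or_imp, forall_eq,
    map_mul, map_inv, map_pow, FreeGroup.lift_apply_of]
  and_intros <;> rfl

def toC2Pow : Abelianization (PresentedGroup relsD8) →* C₂⁴ :=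
  Abelianization.lift (PresentedGroup.toGroup lift_genImage_relator)

def gen (i : Fin 5) : Abelianization (PresentedGroup relsD8) :=
  Abelianization.of (PresentedGroup.of i)

theorem toC2Pow_gen (i : Fin 5) : toC2Pow (gen i) = genImage i := by
  simp [toC2Pow, gen]

theorem lift_gen_relator {r : FreeGroup (Fin 5)} (hr : r ∈ relsD8) :
    FreeGroup.lift gen r = 1 := by
  have : FreeGroup.lift gen = Abelianization.of.comp (PresentedGroup.mk relsD8) :=
    FreeGroup.ext_hom _ _ fun _ => rfl
  rw [this, MonoidHom.comp_apply, PresentedGroup.one_of_mem hr, map_one]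

theorem gen_four_eq_gen_two : gen 4 = gen 2 := by
  have h := lift_gen_relator
    (r := (FreeGroup.of 0)⁻¹ * FreeGroup.of 4 * FreeGroup.of 0 * (FreeGroup.of 2)⁻¹)
    (by simp [relsD8])
  simpa [inv_mul_cancel_comm, mul_inv_eq_one] using h

theorem gen_sq_eq_one (i : Fin 5) : gen i ^ 2 = 1 := by
  have of_conj_one (j : Fin 5)
      (hj : (FreeGroup.of 1)⁻¹ * FreeGroup.of j * FreeGroup.of 1 * FreeGroup.of j ∈ relsD8) :
      gen j ^ 2 = 1 := by
    simpa [inv_mul_cancel_comm, sq] using lift_gen_relator hj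
  fin_cases i
  · exact of_conj_one 0 (by simp [relsD8])
  · have h := lift_gen_relator (r := FreeGroup.of 1 ^ 2) (by simp [relsD8])
    rwa [map_pow, FreeGroup.lift_apply_of] at h
  · exact of_conj_one 2 (by simp [relsD8])
  · have h := lift_gen_relator (r := (FreeGroup.of 0)⁻¹ * FreeGroup.of 3 * FreeGroup.of 0 *
      (FreeGroup.of 2 * FreeGroup.of 3 * FreeGroup.of 4)) (by simp [relsD8])
    simp only [map_mul, map_inv, FreeGroup.lift_apply_of, inv_mul_cancel_comm,
      gen_four_eq_gen_two] at h
    have h3 : gen 3 ^ 2 * gen 2 ^ 2 = gen 3 * (gen 2 * gen 3 * gen 2) := by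
      simp only [sq]
      ac_rfl
    rwa [h, of_conj_one 2 (by simp [relsD8]), mul_one] at h3
  · exact of_conj_one 4 (by simp [relsD8])

def ofC2Pow : C₂⁴ →* Abelianization (PresentedGroup relsD8) where
  toFun c := gen 0 ^ c.toAdd.1.val * gen 1 ^ c.toAdd.2.1.val * gen 2 ^ c.toAdd.2.2.1.val *
    gen 3 ^ c.toAdd.2.2.2.val
  map_one' := by simp
  map_mul' c d := by
    simp only [toAdd_mul, Prod.fst_add, Prod.snd_add,
      pow_val_add_of_pow_eq_one (gen_sq_eq_one _)]
    ac_rfl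

theorem ofC2Pow_genImage (i : Fin 5) : ofC2Pow (genImage i) = gen i := by
  fin_cases i <;> simp [ofC2Pow, genImage, gen_four_eq_gen_two, ZMod.val_one]

theorem ofC2Pow_comp_toC2Pow : ofC2Pow.comp toC2Pow = .id _ :=
  Abelianization.hom_ext _ _ <| PresentedGroup.ext fun i =>
    show ofC2Pow (toC2Pow (gen i)) = gen i by rw [toC2Pow_gen, ofC2Pow_genImage]

theorem toC2Pow_comp_ofC2Pow : toC2Pow.comp ofC2Pow = .id _ := by
  refine MonoidHom.ext fun c => ?_
  obtain ⟨⟨c₁, c₂, c₃, c₄⟩, rfl⟩ : ∃ x, ofAdd x = c := ⟨c.toAdd, rfl⟩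
  simp [ofC2Pow, toC2Pow_gen, genImage, ← ofAdd_nsmul, ← ofAdd_add]

end VZD8

/-- for the group `V = V(ℤD₈)` with the presentation above,
`V/V' ≅ C₂ × C₂ × C₂ × C₂`. -/
theorem abelianization_VZD8 :
    Nonempty (Abelianization (PresentedGroup relsD8) ≃*
      Multiplicative (ZMod 2 × ZMod 2 × ZMod 2 × ZMod 2)) :=
  ⟨VZD8.toC2Pow.toMulEquiv VZD8.ofC2Pow VZD8.ofC2Pow_comp_toC2Pow VZD8.toC2Pow_comp_ofC2Pow⟩
end

section
/- Let N be the direct sum of countably many Prüfer 2-groups C_{2^∞} and let x be an involution acting on N by inversion, G = N ⋊ ⟨x⟩. Then the center of G is infinite (consisting of 1 and all involutions of N), but G' = N, so the abelianization G/G' has order 2 and is finite. -/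
/-!
Since `N` is abelian, an element of `N` fixed by `x` is central in `G`; as `x` acts by
inversion these are the involutions of `N`, e.g. `-1` placed in any one coordinate, so the
center is infinite. The commutator `[n, x]` equals `n²`, and every element of a Prüfer group,
hence of `N`, is a square; therefore `G' = N` and `G / G' ≅ ⟨x⟩`. Finally `x ≠ 1`: in a
nontrivial group of squares not every element is an involution.
-/

open DirectSum

/-- The Prüfer 2-group `C_{2^∞}`, realized as the group of complex roots of unity
of 2-power order. -/
def Prufer2 : Subgroup ℂˣ where
  carrier := {z | ∃ n : ℕ, z ^ (2 ^ n) = 1}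
  one_mem' := ⟨0, one_pow _⟩
  mul_mem' := by
    rintro a b ⟨n, ha⟩ ⟨m, hb⟩
    refine ⟨n + m, ?_⟩
    have h2 : (2 : ℕ) ^ (n + m) = 2 ^ n * 2 ^ m := pow_add 2 n m
    rw [mul_pow, h2, pow_mul, ha, one_pow, one_mul, mul_comm ((2:ℕ) ^ n) (2 ^ m),
      pow_mul, hb, one_pow]
  inv_mem' := by
    rintro a ⟨n, ha⟩
    exact ⟨n, by rw [inv_pow, ha, inv_one]⟩

/-- `N = ⊕_{i ∈ ℕ} C_{2^∞}`, a direct sum of countably many Prüfer 2-groups. -/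
abbrev PruferSum : Type := ⨁ _i : ℕ, Additive ↥Prufer2

/-- The involution `x` acting on `N` by inversion, as an automorphism. -/
def invAut : MulAut (Multiplicative PruferSum) := MulEquiv.inv (Multiplicative PruferSum)

/-- `G = N ⋊ ⟨x⟩`, the semidirect product of `N` with the involution acting by inversion. -/
abbrev PruferExt : Type :=
  SemidirectProduct (Multiplicative PruferSum) ↥(Subgroup.zpowers invAut)
    (Subgroup.zpowers invAut).subtype

namespace SemidirectProduct

section
variable {N : Type*} [Group N]

open scoped commutatorElement in
theorem commutatorElement_inl_inr_of_apply_eq_inv {G : Type*} [Group G] {φ : G →* MulAut N}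
    {g : G} (hg : ∀ n, φ g n = n⁻¹) (n : N) :
    ⁅(inl n : N ⋊[φ] G), (inr g : N ⋊[φ] G)⁆ = inl (n ^ 2) := by
  rw [commutatorElement_def, ← map_inv inr, ← map_inv inl, mul_assoc (inl n), mul_assoc (inl n),
    ← inl_aut, ← map_mul, hg, inv_inv, sq]

theorem card_abelianization_of_commutator_eq_range_inl {G : Type*} [Group G]
    {φ : G →* MulAut N} (h : commutator (N ⋊[φ] G) = inl.range) :
    Nat.card (Abelianization (N ⋊[φ] G)) = Nat.card G :=
  Nat.card_congr ((QuotientGroup.quotientMulEquivOfEq (h.trans range_inl_eq_ker_rightHom)).trans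
    (toGroupExtension φ).quotientKerRightHomEquivRight).toEquiv

variable {G : Type*} [Group G] [IsMulCommutative G] {φ : G →* MulAut N}

theorem commutator_le_range_inl : commutator (N ⋊[φ] G) ≤ inl.range := by
  rw [range_inl_eq_ker_rightHom, commutator_def, Subgroup.commutator_le]
  intro x _ y _
  rw [MonoidHom.mem_ker, map_commutatorElement, commutatorElement_eq_one_iff_mul_comm, mul_comm']

theorem commutator_eq_range_inl {g : G} (hg : ∀ n, φ g n = n⁻¹)
    (hsq : ∀ n : N, ∃ m, m ^ 2 = n) : commutator (N ⋊[φ] G) = inl.range := by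
  refine commutator_le_range_inl.antisymm ?_
  rintro _ ⟨n, rfl⟩
  obtain ⟨m, rfl⟩ := hsq n
  rw [← commutatorElement_inl_inr_of_apply_eq_inv hg]
  exact Subgroup.commutator_mem_commutator (Subgroup.mem_top _) (Subgroup.mem_top _)

end

theorem inl_mem_center {N G : Type*} [CommGroup N] [Group G] {φ : G →* MulAut N} {n : N}
    (hn : ∀ g, φ g n = n) : inl n ∈ Subgroup.center (N ⋊[φ] G) := by
  rw [Subgroup.mem_center_iff]
  intro x
  ext
  · simp [hn, mul_comm]
  · simp

end SemidirectProduct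

theorem orderOf_mulEquiv_inv {N : Type*} [CommGroup N] [Nontrivial N]
    (hsq : ∀ n : N, ∃ m, m ^ 2 = n) : orderOf (MulEquiv.inv N) = 2 := by
  refine orderOf_eq_prime (MulEquiv.ext fun n => inv_inv n) fun h => ?_
  obtain ⟨n, hn⟩ := exists_ne (1 : N)
  obtain ⟨m, rfl⟩ := hsq n
  have hm : m⁻¹ = m := DFunLike.congr_fun h m
  exact hn ((sq m).trans (mul_eq_one_iff_eq_inv.mpr hm.symm))

theorem DirectSum.exists_nsmul_eq {ι : Type*} {β : ι → Type*}
    [∀ i, AddCommMonoid (β i)] {k : ℕ} (h : ∀ i (b : β i), ∃ a, k • a = b) (v : ⨁ i, β i) :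
    ∃ w, k • w = v := by
  classical
  induction v using DirectSum.induction_on with
  | zero => exact ⟨0, smul_zero k⟩
  | of i b =>
    obtain ⟨a, rfl⟩ := h i b
    exact ⟨of β i a, (map_nsmul _ _ _).symm⟩
  | add x y hx hy =>
    obtain ⟨w, rfl⟩ := hx
    obtain ⟨w', rfl⟩ := hy
    exact ⟨w + w', smul_add k w w'⟩

namespace Prufer2

theorem exists_sq_eq (z : Prufer2) : ∃ w : Prufer2, w ^ 2 = z := by
  obtain ⟨n, hn⟩ := z.2
  obtain ⟨w, hw⟩ := IsAlgClosed.exists_eq_mul_self ((z : ℂˣ) : ℂ)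
  have hw0 : w ≠ 0 := by rintro rfl; simp at hw
  have hsq : Units.mk0 w hw0 ^ 2 = z := Units.ext (by simp [hw, sq])
  refine ⟨⟨Units.mk0 w hw0, n + 1, ?_⟩, Subtype.ext hsq⟩
  rw [pow_succ', pow_mul, hsq, hn]

noncomputable def negOne : Prufer2 := ⟨-1, 1, by norm_num⟩

theorem negOne_inv : negOne⁻¹ = negOne := Subtype.ext (inv_neg_one)

theorem negOne_ne_one : negOne ≠ 1 := by
  norm_num [negOne, Subtype.ext_iff, Units.ext_iff]

end Prufer2

namespace PruferSum

theorem exists_sq_eq (n : Multiplicative PruferSum) : ∃ m, m ^ 2 = n :=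
  DirectSum.exists_nsmul_eq (fun _ b => Prufer2.exists_sq_eq b.toMul) n.toAdd

noncomputable def negOneAt (i : ℕ) : Multiplicative PruferSum :=
  .ofAdd (of _ i (.ofMul Prufer2.negOne))

theorem negOneAt_injective : Function.Injective negOneAt :=
  Multiplicative.ofAdd.injective.comp <| DFinsupp.single_left_injective
    (b := fun _ => Additive.ofMul Prufer2.negOne) fun _ => Prufer2.negOne_ne_one

theorem negOneAt_inv (i : ℕ) : (negOneAt i)⁻¹ = negOneAt i := by
  rw [negOneAt, ← ofAdd_neg, ← map_neg, ← ofMul_inv, Prufer2.negOne_inv]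

end PruferSum

theorem PruferExt.inl_mem_center {n : Multiplicative PruferSum} (hn : n⁻¹ = n) :
    (SemidirectProduct.inl n : PruferExt) ∈ Subgroup.center PruferExt := by
  refine SemidirectProduct.inl_mem_center (N := Multiplicative PruferSum)
    (φ := (Subgroup.zpowers invAut).subtype) fun ⟨τ, hτ⟩ => ?_
  exact Subgroup.zpowers_le.mpr (show invAut ∈ MulAction.stabilizer _ n from hn) hτ

theorem PruferExt.infinite_center : Infinite (Subgroup.center PruferExt) :=
  Infinite.of_injective
    (fun i => ⟨_, PruferExt.inl_mem_center (PruferSum.negOneAt_inv i)⟩)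
    fun _ _ h => PruferSum.negOneAt_injective
      (SemidirectProduct.inl_injective (congrArg Subtype.val h))

/-- `G = N ⋊ ⟨x⟩` has infinite center, its commutator subgroup equals `N`,
and its abelianization has order `2` (in particular it is finite). -/
theorem prufer_semidirect_infinite_center_finite_abelianization :
    Infinite ↥(Subgroup.center PruferExt) ∧
    commutator PruferExt =
      (SemidirectProduct.inl : Multiplicative PruferSum →* PruferExt).range ∧
    Nat.card (Abelianization PruferExt) = 2 := by
  have hcomm : commutator PruferExt = SemidirectProduct.inl.range :=
    SemidirectProduct.commutator_eq_range_inl (g := ⟨invAut, Subgroup.mem_zpowers invAut⟩)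
      (fun _ => rfl) PruferSum.exists_sq_eq
  refine ⟨PruferExt.infinite_center, hcomm, ?_⟩
  have : Infinite (Multiplicative PruferSum) := .of_injective _ PruferSum.negOneAt_injective
  rw [SemidirectProduct.card_abelianization_of_commutator_eq_range_inl hcomm, Nat.card_zpowers]
  exact orderOf_mulEquiv_inv (N := Multiplicative PruferSum) PruferSum.exists_sq_eq
end

section
/- Let G be a finite group, g, h ∈ G, and suppose g normalizes the cyclic subgroup ⟨h⟩. Then the bicyclic unit b(g,h) = 1 + (1-h)·g·H̃ equals 1; conversely if g does not normalize ⟨h⟩, then b(g,h) ≠ 1 and b(g,h) has infinite order in U(ℤG). -/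
/-!
Write `N = (1 - h) g H̃`, so `b(g,h) = 1 + N`. Since `(1 - h) H̃ = H̃ (1 - h) = 0`, we get `N² = 0`
and hence `b(g,h)^m = 1 + m N`. If `g⁻¹ h g = h^k` then `h g H̃ = g h^k H̃ = g H̃`, so `N = 0`.
Otherwise, push `N` forward along `G → G ⧸ ⟨h⟩`: both `g H̃` and `h g H̃` collapse to `ord(h)` times
a single coset, and these cosets `g⟨h⟩ ≠ hg⟨h⟩` differ, so the coefficient of `g⟨h⟩` in the image of
`m N` is `m · ord(h) ≠ 0`. For finite-order `h`, `g⁻¹ h g ∈ ⟨h⟩` already forces `g` to normalize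
`⟨h⟩`, as the two cyclic groups have the same order.
-/

open MonoidAlgebra Finset Subgroup

namespace Subgroup

theorem mem_normalizer_zpowers_iff {G : Type*} [Group G] {g h : G} (hh : IsOfFinOrder h) :
    g ∈ normalizer (zpowers h : Set G) ↔ g⁻¹ * h * g ∈ zpowers h := by
  have : Finite (zpowers h) := hh.finite_zpowers.to_subtype
  rw [← inv_mem_iff, mem_normalizer_iff_map_conj_eq, MonoidHom.map_zpowers, MonoidHom.coe_coe,
    MulAut.conj_apply, inv_inv]
  refine ⟨fun heq => heq ▸ mem_zpowers _, fun hmem => eq_of_le_of_card_ge (zpowers_le.2 hmem) ?_⟩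
  rw [Nat.card_zpowers, Nat.card_zpowers, (SemiconjBy.conj_mk g⁻¹ h).orderOf_eq, inv_inv]

end Subgroup

theorem one_add_pow_of_mul_self_eq_zero {A : Type*} [Semiring A] {N : A} (hN : N * N = 0) (m : ℕ) :
    (1 + N) ^ m = 1 + m • N := by
  induction m with
  | zero => simp
  | succ m ih =>
    rw [pow_succ, ih, add_mul, one_mul, mul_add, mul_one, smul_mul_assoc, hN, smul_zero, succ_nsmul]
    abel

namespace MonoidAlgebra

variable (R : Type*) [Ring R] {G : Type*} [Group G]

/-- The paper's `H̃`. When `h` has infinite order, `orderOf h = 0` and this sum is `0`. -/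
noncomputable def zpowersSum (h : G) : MonoidAlgebra R G :=
  ∑ k ∈ range (orderOf h), of R G h ^ k

noncomputable def bicyclicUnit (g h : G) : MonoidAlgebra R G :=
  1 + (1 - of R G h) * of R G g * zpowersSum R h

variable {R} {g h : G}

theorem one_sub_of_mul_zpowersSum : (1 - of R G h) * zpowersSum R h = 0 := by
  rw [zpowersSum, mul_neg_geom_sum, ← map_pow, pow_orderOf_eq_one, map_one, sub_self]

theorem zpowersSum_mul_one_sub_of : zpowersSum R h * (1 - of R G h) = 0 := by
  rw [zpowersSum, geom_sum_mul_neg, ← map_pow, pow_orderOf_eq_one, map_one, sub_self]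

theorem of_pow_mul_zpowersSum (k : ℕ) : of R G (h ^ k) * zpowersSum R h = zpowersSum R h := by
  have hh : of R G h * zpowersSum R h = zpowersSum R h := by
    rw [← sub_eq_zero, ← neg_sub, ← one_sub_mul, one_sub_of_mul_zpowersSum, neg_zero]
  induction k with
  | zero => rw [pow_zero, map_one, one_mul]
  | succ k ih => rw [pow_succ', map_mul, mul_assoc, ih, hh]

theorem bicyclicUnit_eq_one_of_conj_mem (hh : IsOfFinOrder h) (hg : g⁻¹ * h * g ∈ zpowers h) :
    bicyclicUnit R g h = 1 := by
  obtain ⟨k, hk : h ^ k = g⁻¹ * h * g⟩ := hh.mem_powers_iff_mem_zpowers.2 hg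
  have hcomm : h * g = g * h ^ k := by rw [hk]; group
  rw [bicyclicUnit, sub_mul, sub_mul, one_mul, ← map_mul, hcomm, map_mul, mul_assoc,
    of_pow_mul_zpowersSum, sub_self, add_zero]

theorem bicyclicUnit_pow (m : ℕ) :
    bicyclicUnit R g h ^ m = 1 + m • ((1 - of R G h) * of R G g * zpowersSum R h) := by
  refine one_add_pow_of_mul_self_eq_zero ?_ m
  calc (1 - of R G h) * of R G g * zpowersSum R h * ((1 - of R G h) * of R G g * zpowersSum R h)
      = (1 - of R G h) * of R G g * (zpowersSum R h * (1 - of R G h)) * of R G g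
          * zpowersSum R h := by simp only [mul_assoc]
    _ = 0 := by rw [zpowersSum_mul_one_sub_of, mul_zero, zero_mul, zero_mul]

theorem mapDomain_mk_of_mul_zpowersSum (x : G) :
    mapDomainLinearMap R R (QuotientGroup.mk : G → G ⧸ zpowers h) (of R G x * zpowersSum R h) =
      orderOf h • single (x : G ⧸ zpowers h) 1 := by
  simp_rw [zpowersSum, mul_sum, map_sum, ← map_pow, ← map_mul, of_apply, mapDomainLinearMap_single,
    QuotientGroup.mk_mul_of_mem x (npow_mem_zpowers h _)]
  rw [sum_const, card_range]

theorem coeff_mapDomain_mk_bicyclic (hg : g⁻¹ * h * g ∉ zpowers h) :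
    (mapDomainLinearMap R R (QuotientGroup.mk : G → G ⧸ zpowers h)
      ((1 - of R G h) * of R G g * zpowersSum R h)).coeff g = orderOf h := by
  have hne : (g : G ⧸ zpowers h) ≠ (h * g : G) := by
    rwa [Ne, QuotientGroup.eq, ← mul_assoc]
  rw [sub_mul, sub_mul, one_mul, ← map_mul, map_sub, mapDomain_mk_of_mul_zpowersSum,
    mapDomain_mk_of_mul_zpowersSum]
  simp [hne]

theorem bicyclicUnit_pow_ne_one [CharZero R] (hh : IsOfFinOrder h) (hg : g⁻¹ * h * g ∉ zpowers h)
    {m : ℕ} (hm : m ≠ 0) : bicyclicUnit R g h ^ m ≠ 1 := by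
  intro hb
  rw [bicyclicUnit_pow, add_eq_left] at hb
  have hcoeff : (m * orderOf h : R) = 0 := by
    rw [← nsmul_eq_mul, ← coeff_mapDomain_mk_bicyclic hg, ← coeff_smul_apply, ← map_nsmul, hb,
      map_zero, coeff_zero, Finsupp.zero_apply]
  exact mul_ne_zero hm hh.orderOf_pos.ne' (mod_cast hcoeff)

end MonoidAlgebra

/-- the bicyclic unit `b(g,h) = 1 + (1-h)·g·H̃` (with `H̃ = ∑_{k<n} h^k`,
`n = orderOf h`) equals `1` if `g` normalizes `⟨h⟩`; and if `g` does not normalize `⟨h⟩`,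
then `b(g,h) ≠ 1` and `b(g,h)` has infinite order in `U(ℤG)`, i.e. `b(g,h)^m ≠ 1` for all
`m > 0`. -/
theorem bicyclic_unit_trivial_iff_normalizes {G : Type*} [Group G] [Fintype G] (g h : G)
    (n : ℕ) (hn : orderOf h = n) (b : MonoidAlgebra ℤ G)
    (hb : b = 1 + (1 - of ℤ G h) * of ℤ G g * ∑ k ∈ Finset.range n, (of ℤ G h) ^ k) :
    (g ∈ Subgroup.normalizer ((Subgroup.zpowers h : Subgroup G) : Set G) → b = 1) ∧
    (g ∉ Subgroup.normalizer ((Subgroup.zpowers h : Subgroup G) : Set G) →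
      b ≠ 1 ∧ ∀ m : ℕ, 0 < m → b ^ m ≠ 1) := by
  subst hn
  replace hb : b = bicyclicUnit ℤ g h := hb
  have hh : IsOfFinOrder h := isOfFinOrder_of_finite h
  rw [hb, mem_normalizer_zpowers_iff hh]
  refine ⟨bicyclicUnit_eq_one_of_conj_mem hh,
    fun hg => ⟨?_, fun m hm => bicyclicUnit_pow_ne_one hh hg hm.ne'⟩⟩
  simpa using bicyclicUnit_pow_ne_one (R := ℤ) hh hg one_ne_zero
end
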